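/- Under the continuous random walk algorithm with per-walk stitching cost O(D) per stitch, the average number of messages per length-ℓ walk is O((ℓ/κ)·(1 + κ·D/λ)). In particular, choosing λ = Θ(√(ℓD)) gives an average of O(ℓ/κ + D) messages per walk, using the inequality √(ℓD) ≤ ℓ + D. -/

import Mathlib

/-- The average number of messages per length-`ℓ` walk: total message cost
`η·λ·m·log n + κ·m·η·D·log n` divided by the `κ·m·η·λ·log n/ℓ` completed walks equals
`(ℓ/κ)·(1 + κ·D/λ)`; choosing `λ = √(ℓD)` gives an average of `O(ℓ/κ + D)` messages,
using `√(ℓD) ≤ ℓ + D`. -/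
theorem average_messages_per_walk
    (κ η lam ℓ m D L A : ℝ)
    (hκ0 : 0 < κ) (hκ1 : κ ≤ 1) (hη : 0 < η) (hlam : 0 < lam) (hℓ : 0 < ℓ)
    (hm : 0 < m) (hD : 0 < D) (hL : 0 < L)
    (hA : A = (η * lam * m * L + κ * m * η * D * L) / (κ * m * η * lam * L / ℓ)) :
    A = (ℓ / κ) * (1 + κ * D / lam) ∧
    (lam = Real.sqrt (ℓ * D) → A ≤ 2 * (ℓ / κ + D)) := by
  have hform : A = (ℓ / κ) * (1 + κ * D / lam) := by
    rw [hA]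
    field_simp
  refine ⟨hform, fun hlamv => ?_⟩
  have hsq : lam * lam = ℓ * D := by
    rw [hlamv]
    exact Real.mul_self_sqrt (by positivity)
  have h1 : A = ℓ / κ + ℓ * D / lam := by
    rw [hform]; field_simp
  have h2 : ℓ * D / lam = lam := by
    rw [← hsq]; field_simp
  have hle : lam ≤ ℓ + D := by
    have h3 : Real.sqrt (ℓ * D) ≤ Real.sqrt ((ℓ + D) ^ 2) :=
      Real.sqrt_le_sqrt (by nlinarith [sq_nonneg (ℓ - D)])
    rw [Real.sqrt_sq (by positivity)] at h3
    rw [hlamv]; exact h3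
  have hℓκ : ℓ ≤ ℓ / κ := by
    rw [le_div_iff₀ hκ0]; nlinarith
  rw [h1, h2]
  linarith
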